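/- Let h be a multisegment, Δ a segment admissible to h, and Δ' a segment linked to Δ with Δ < Δ'. Then the following are equivalent: (1) the triple (Δ, Δ', h) satisfies the non-overlapping property; (2) η_{Δ'}(h) = η_{Δ'}(r(Δ,h)); (3) the triple (Δ, Δ', h) satisfies the intermediate segment property. -/

import Mathlib

noncomputable section
open Classical

/-- A segment `[a,b]`: a pair of integers with `a ≤ b`, identified with the
integer interval `{a, a+1, …, b}`. -/
def Seg : Type := {p : ℤ × ℤ // p.1 ≤ p.2}

/-- Constructor for segments. -/
def Seg.mk (a b : ℤ) (hab : a ≤ b) : Seg := Subtype.mk (a, b) hab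

instance : DecidableEq Seg := inferInstanceAs (DecidableEq {p : ℤ × ℤ // p.1 ≤ p.2})

instance : Inhabited Seg := ⟨Seg.mk 0 0 le_rfl⟩

/-- The lexicographic ordering `≼ᴸ` on segments: `[a,b] ≤ [a',b']` iff `a < a'`,
or `a = a'` and `b ≤ b'`. -/
instance : LinearOrder Seg :=
  LinearOrder.lift' (fun Δ => toLex (Subtype.val Δ))
    (fun _ _ hh => Subtype.ext (toLex.injective hh))

/-- `a(Δ)`, the left endpoint. -/
def segA (Δ : Seg) : ℤ := (Subtype.val Δ).1

/-- `b(Δ)`, the right endpoint. -/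
def segB (Δ : Seg) : ℤ := (Subtype.val Δ).2

/-- `[a,b]` as a multiset of segments: a singleton if `a ≤ b`, empty otherwise
("empty segments are discarded"). -/
def mkSeg? (a b : ℤ) : Multiset Seg := if h : a ≤ b then {Seg.mk a b h} else 0

/-- `⁻Δ = [a+1,b]`, as a multiset (the empty segment being discarded). -/
def negSeg (Δ : Seg) : Multiset Seg := mkSeg? (segA Δ + 1) (segB Δ)

/-- `⁻m` for a multisegment `m`. -/
def negM (m : Multiset Seg) : Multiset Seg := m.bind negSeg

/-- `m[c]`: the submultiset of segments of `m` starting at `c`. -/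
def atc (m : Multiset Seg) (c : ℤ) : Multiset Seg := m.filter (fun Δ => segA Δ = c)

/-- `Δ ⊆ Δ'` as intervals. -/
def Subseg (Δ Δ' : Seg) : Prop := segA Δ' ≤ segA Δ ∧ segB Δ ≤ segB Δ'

/-- Two segments are linked: their union is an interval and neither contains
the other. -/
def Linked (Δ Δ' : Seg) : Prop :=
  segA Δ ≤ segB Δ' + 1 ∧ segA Δ' ≤ segB Δ + 1 ∧ ¬ Subseg Δ Δ' ∧ ¬ Subseg Δ' Δ

/-- `Δ = [a,b]` is admissible to `h`: `h` contains a segment `[a,c]` with `c ≥ b`. -/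
def SegAdmissible (Δ : Seg) (h : Multiset Seg) : Prop :=
  ∃ D ∈ h, segA D = segA Δ ∧ segB Δ ≤ segB D

/-- The tail of the removal sequence: recursively pick the `≺ᴸ`-minimal segment
`[aᵢ,bᵢ]` of `h` with `a_{i-1} < aᵢ` and `b ≤ bᵢ < b_{i-1}`. -/
def removalTail (h : Multiset Seg) (b : ℤ) : ℕ → ℤ → ℤ → List Seg
  | 0, _, _ => []
  | fuel + 1, aprev, bprev =>
    if hx : ∃ D, (D ∈ h ∧ aprev < segA D ∧ b ≤ segB D ∧ segB D < bprev) ∧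
        ∀ D', (D' ∈ h ∧ aprev < segA D' ∧ b ≤ segB D' ∧ segB D' < bprev) → D ≤ D' then
      Classical.choose hx ::
        removalTail h b fuel (segA (Classical.choose hx)) (segB (Classical.choose hx))
    else []

/-- The removal sequence for `(Δ, h)`: `Δ₁` is a shortest segment `[a,c]` of `h`
with `c ≥ b`, followed by the recursively chosen segments. (Empty if `Δ` is not
admissible to `h`.) -/
def removalSeq (Δ : Seg) (h : Multiset Seg) : List Seg :=
  if hx : ∃ D, (D ∈ h ∧ segA D = segA Δ ∧ segB Δ ≤ segB D) ∧
      ∀ D', (D' ∈ h ∧ segA D' = segA Δ ∧ segB Δ ≤ segB D') → segB D ≤ segB D' then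
    Classical.choose hx ::
      removalTail h (segB Δ) (segB (Classical.choose hx) - segB Δ).toNat
        (segA (Classical.choose hx)) (segB (Classical.choose hx))
  else []

/-- `Υ(Δ,h)`: the first segment of the removal sequence for `(Δ,h)`. -/
def Upsilon (Δ : Seg) (h : Multiset Seg) : Seg := (removalSeq Δ h).headD default

/-- The truncations `Δ₁ᵗʳ, …, Δᵣᵗʳ` of a removal sequence:
`Δᵢᵗʳ = [a_{i+1}, bᵢ]` for `i < r` and `Δᵣᵗʳ = [b+1, bᵣ]` (possibly empty). -/
def truncList (b : ℤ) : List Seg → Multiset Seg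
  | [] => 0
  | [D] => mkSeg? (b + 1) (segB D)
  | D :: D' :: rest => mkSeg? (segA D') (segB D) + truncList b (D' :: rest)

/-- `r(Δ,h) = h − Δ₁ − … − Δᵣ + Δ₁ᵗʳ + … + Δᵣᵗʳ`, with `none` playing the role
of the infinity multisegment `∞`. -/
def segRemove (Δ : Seg) (h : Multiset Seg) : Option (Multiset Seg) :=
  if SegAdmissible Δ h then
    some (h - (removalSeq Δ h : Multiset Seg) + truncList (segB Δ) (removalSeq Δ h))
  else none

/-- Iterated removal along a list of segments (also `r(Δ,∞) = ∞`). -/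
def rList : List Seg → Option (Multiset Seg) → Option (Multiset Seg)
  | [], o => o
  | Δ :: rest, o => rList rest (o.bind (fun x => segRemove Δ x))

/-- `r(m,h)` for a multisegment `m`: apply the removals along the segments of
`m` listed in an ascending (here: `≺ᴸ`-sorted) order. -/
def rM (m h : Multiset Seg) : Option (Multiset Seg) :=
  rList (m.sort (· ≤ ·)) (some h)

/-- The smallest integer `a` with `n[a] ≠ ∅` (junk value `0` for `n = ∅`). -/
def minStart (n : Multiset Seg) : ℤ := ((n.map segA).sort (· ≤ ·)).headD 0

/-- `Υ(Δ₁,r₀), Υ(Δ₂,r₁), …` computed sequentially along a list of segments. -/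
def fsList : List Seg → Multiset Seg → Multiset Seg
  | [], _ => 0
  | Δ :: rest, h =>
    Upsilon Δ h ::ₘ
      (match segRemove Δ h with
        | some h' => fsList rest h'
        | none => 0)

/-- `fs(n,h)`: with `a` the smallest integer such that `n[a] ≠ ∅` and
`n[a] = {Δ₁, …, Δₖ}`, this is `{Υ(Δ₁,r₀), …, Υ(Δₖ,r_{k-1})}` if `n[a]` is
admissible to `h`, and `∅` otherwise (also `fs(∅,h) = ∅`). -/
def fs (n h : Multiset Seg) : Multiset Seg :=
  if n = 0 then 0
  else if rM (atc n (minStart n)) h ≠ none then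
    fsList ((atc n (minStart n)).sort (· ≤ ·)) h
  else 0

/-- `trr(n,h) = h − fs(n,h) + ⁻(fs(n,h))`. -/
def trr (n h : Multiset Seg) : Multiset Seg := h - fs n h + negM (fs n h)

/-- `trd(n,h) = n − n[a] + ⁻(n[a])` where `a` is the smallest integer with
`n[a] ≠ ∅` (and `trd(∅,h) = ∅`). -/
def trd (n h : Multiset Seg) : Multiset Seg :=
  if n = 0 then 0 else n - atc n (minStart n) + negM (atc n (minStart n))

/-- The pairs `(nᵢ, hᵢ)` of the fine chain: `n₀ = n`, `h₀ = h`,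
`nᵢ = trd(n_{i-1}, h_{i-1})`, `hᵢ = trr(n_{i-1}, h_{i-1})`. -/
def fcPair (n h : Multiset Seg) : ℕ → Multiset Seg × Multiset Seg
  | 0 => (n, h)
  | i + 1 => (trd (fcPair n h i).1 (fcPair n h i).2, trr (fcPair n h i).1 (fcPair n h i).2)

/-- The fine chain `fc_h(n)`: the sequence `fs(n₀,h₀), fs(n₁,h₁), …`. -/
def fc (h n : Multiset Seg) (i : ℕ) : Multiset Seg := fs (fcPair n h i).1 (fcPair n h i).2

/-- `n` is obtained from `m` by an elementary intersection-union operation: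
`n = m − Δ − Δ' + (Δ ∪ Δ') + (Δ ∩ Δ')` for a pair of linked segments `Δ, Δ'`
of `m` (intersection omitted if empty). -/
def elemIU (m n : Multiset Seg) : Prop :=
  ∃ Δ Δ', Δ ∈ m ∧ Δ' ∈ m.erase Δ ∧ Linked Δ Δ' ∧
    n = (m.erase Δ).erase Δ'
        + mkSeg? (min (segA Δ) (segA Δ')) (max (segB Δ) (segB Δ'))
        + mkSeg? (max (segA Δ) (segA Δ')) (min (segB Δ) (segB Δ'))

/-- The Zelevinsky ordering: `n ≤_Z m` iff `n = m` or `n` is obtained from `m`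
by a finite sequence of elementary intersection-union operations. -/
def leZ (n m : Multiset Seg) : Prop := Relation.ReflTransGen elemIU m n

/-- The cuspidal support of a multisegment: the multiset union of its segments,
as a multiset of integers. -/
def csupp (m : Multiset Seg) : Multiset ℤ :=
  m.bind (fun Δ => (Finset.Icc (segA Δ) (segB Δ)).val)

/-- The `b`-values of a multisegment, sorted in descending order. -/
def bDesc (m : Multiset Seg) : List ℤ := ((m.map segB).sort (· ≤ ·)).reverse

/-- `m₁ ≤ᵃ_c m₂` for multisegments at a point `c`: with segments labelled
`Δ_{1,k} ≤ᵃ_c … ≤ᵃ_c Δ_{1,1}` and `Δ_{2,r} ≤ᵃ_c … ≤ᵃ_c Δ_{2,1}`, require `k ≤ r`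
and `Δ_{1,i} ≤ᵃ_c Δ_{2,i}` for all `i ≤ k`. -/
def leA (m₁ m₂ : Multiset Seg) : Prop :=
  (bDesc m₁).length ≤ (bDesc m₂).length ∧
    ∀ i < (bDesc m₁).length, (bDesc m₁).getD i 0 ≤ (bDesc m₂).getD i 0

/-- `m₁ <ᵃ_c m₂`. -/
def ltA (m₁ m₂ : Multiset Seg) : Prop := leA m₁ m₂ ∧ m₁ ≠ m₂

/-- The fine chain ordering `n <^{fc} n'` (with respect to `h`). -/
def ltFC (h n n' : Multiset Seg) : Prop :=
  ∃ i, (∀ j < i, fc h n j = fc h n' j) ∧ ltA (fc h n i) (fc h n' i)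

/-- `n ≤^{fc} n'`: either `n <^{fc} n'` or the two fine chains are equal. -/
def leFC (h n n' : Multiset Seg) : Prop := ltFC h n n' ∨ ∀ i, fc h n i = fc h n' i

/-- Local minimizability of `(n,h)`: with `a` the smallest integer such that
`n[a] ≠ ∅`, there is a segment `Δ̄` in `n[a+1]` with
`|{Δ ∈ n[a] : Δ̄ ⊆ Δ}| < |{Δ ∈ fs(n,h) : Δ̄ ⊆ Δ}|`. -/
def locallyMin (n h : Multiset Seg) : Prop :=
  ∃ Δb ∈ atc n (minStart n + 1),
    ((atc n (minStart n)).filter (fun Δ => Subseg Δb Δ)).card <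
      ((fs n h).filter (fun Δ => Subseg Δb Δ)).card

/-- The shortest segment of the removal sequence for `(Δ,h)` whose interval
contains `x` (by the nesting property, the last such one in the sequence). -/
def shortestCont (Δ : Seg) (h : Multiset Seg) (x : ℤ) : Seg :=
  (((removalSeq Δ h).filter (fun D => decide (segA D ≤ x ∧ x ≤ segB D))).getLast?).getD default

/-- The non-overlapping property for `(Δ, Δ', h)`: for the shortest segment `Δ̄`
in the removal sequence for `(Δ,h)` containing `a(Δ') − 1`, one has `Δ' ⊄ Δ̄`. -/
def NonOverlap (Δ Δ' : Seg) (h : Multiset Seg) : Prop :=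
  ¬ Subseg Δ' (shortestCont Δ h (segA Δ' - 1))

/-- `ε_Δ(h) = |{Δ̃ ∈ h[a(Δ)] : Δ ⊆ Δ̃}|`, counted with multiplicity. -/
def epsilonSeg (Δ : Seg) (h : Multiset Seg) : ℕ :=
  ((atc h (segA Δ)).filter (fun D => Subseg Δ D)).card

/-- `η_{Δ'}(h) = η_{Δ'}(h')`: componentwise equality of
`(ε_{[a',b']}, ε_{[a'+1,b']}, …, ε_{[b',b']})`. -/
def etaEq (Δ' : Seg) (h h' : Multiset Seg) : Prop :=
  ∀ c, segA Δ' ≤ c → ∀ hc : c ≤ segB Δ',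
    epsilonSeg (Seg.mk c (segB Δ') hc) h = epsilonSeg (Seg.mk c (segB Δ') hc) h'

/-- The intermediate segment property for `(Δ, Δ', h)`. -/
def IntermediateSeg (Δ Δ' : Seg) (h : Multiset Seg) : Prop :=
  ∃ D ∈ h, segA Δ ≤ segA D ∧ segA D < segA Δ' ∧ segB Δ ≤ segB D ∧ segB D < segB Δ'

/-- Helper to build segments from literals. -/
def sg (a b : ℤ) (hab : a ≤ b := by decide) : Seg := Seg.mk a b hab

/-!
The removal sequence `Δ₁ ⊋ Δ₂ ⊋ ⋯` of `(Δ, h)` consists of segments ending at or after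
`b(Δ) ≥ a(Δ') - 1`, so `Δ̄` is the last `Δᵢ` starting before `a(Δ')`, and the shortest of those.
Hence each of the three conditions says that some `Δᵢ` starts before `a(Δ')` and ends before
`b(Δ')`. For the intermediate segment property this is the minimality built into the removal
sequence. For `η`, removing `Δ` replaces each `Δᵢ₊₁` by the longer `[aᵢ₊₁, bᵢ]` and adds
`[b(Δ)+1, bᵣ]`, so `ε_{[c,b(Δ')]}` can only grow, and it grows for some `c ∈ [a(Δ'), b(Δ')]`
exactly when `Δ̄` still ends at or after `b(Δ')`.
-/

lemma segA_le_segB (D : Seg) : segA D ≤ segB D := D.2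

@[simp] lemma segA_mk (a b : ℤ) (hab : a ≤ b) : segA (Seg.mk a b hab) = a := rfl

@[simp] lemma segB_mk (a b : ℤ) (hab : a ≤ b) : segB (Seg.mk a b hab) = b := rfl

lemma seg_le_iff {D E : Seg} :
    D ≤ E ↔ segA D < segA E ∨ segA D = segA E ∧ segB D ≤ segB E :=
  Prod.Lex.le_iff

lemma Multiset.exists_min_image_of_exists {α β : Type*} [LinearOrder β] (f : α → β)
    {s : Multiset α} {P : α → Prop} (hP : ∃ x ∈ s, P x) :
    ∃ x, (x ∈ s ∧ P x) ∧ ∀ y, y ∈ s ∧ P y → f x ≤ f y := by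
  obtain ⟨x, hxs, hx⟩ := hP
  have hx' : x ∈ s.filter P := Multiset.mem_filter.2 ⟨hxs, hx⟩
  obtain ⟨y, hy, hmin⟩ := Multiset.exists_min_image f (s := s.filter P)
    fun h0 => by simp [h0] at hx'
  exact ⟨y, Multiset.mem_filter.1 hy, fun z hz => hmin z (Multiset.mem_filter.2 hz)⟩

def Nested (l : List Seg) : Prop :=
  l.Pairwise fun D E => segA D < segA E ∧ segB E < segB D

lemma Nested.nodup {l : List Seg} (hl : Nested l) : l.Nodup :=
  hl.imp fun hDE hEq => (hEq ▸ hDE).1.false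

section RemovalSequence

variable (h : Multiset Seg) (b : ℤ)

lemma mem_removalTail {f : ℕ} {ap bp : ℤ} {D : Seg} (hD : D ∈ removalTail h b f ap bp) :
    D ∈ h ∧ ap < segA D ∧ b ≤ segB D ∧ segB D < bp := by
  induction f generalizing ap bp with
  | zero => simp [removalTail] at hD
  | succ f ih =>
    rw [removalTail] at hD
    split at hD
    case isFalse => simp at hD
    case isTrue hx =>
      obtain ⟨⟨hmem, ha, hb, hbp⟩, -⟩ := Classical.choose_spec hx
      rcases List.mem_cons.mp hD with rfl | hD
      · exact ⟨hmem, ha, hb, hbp⟩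
      · obtain ⟨hD, ha', hb', hbp'⟩ := ih hD
        exact ⟨hD, ha.trans ha', hb', hbp'.trans hbp⟩

lemma removalTail_nested (f : ℕ) (ap bp : ℤ) : Nested (removalTail h b f ap bp) := by
  induction f generalizing ap bp with
  | zero => exact List.Pairwise.nil
  | succ f ih =>
    rw [removalTail]
    split
    case isFalse => exact List.Pairwise.nil
    case isTrue hx =>
      refine List.Pairwise.cons (fun E hE => ?_) (ih _ _)
      obtain ⟨-, ha, -, hb⟩ := mem_removalTail h b hE
      exact ⟨ha, hb⟩

/-- The fuel `(bp - b).toNat` suffices because the right ends strictly decrease and stay `≥ b`. -/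
lemma exists_mem_removalTail_le {f : ℕ} {ap bp : ℤ} (hf : (bp - b).toNat ≤ f) {D : Seg}
    (hD : D ∈ h) (ha : ap < segA D) (hb : b ≤ segB D) (hbp : segB D < bp) :
    ∃ E ∈ removalTail h b f ap bp, segA E ≤ segA D ∧ segB E ≤ segB D := by
  induction f generalizing ap bp with
  | zero => omega
  | succ f ih =>
    have hx : ∃ E, (E ∈ h ∧ ap < segA E ∧ b ≤ segB E ∧ segB E < bp) ∧
        ∀ E', (E' ∈ h ∧ ap < segA E' ∧ b ≤ segB E' ∧ segB E' < bp) → E ≤ E' :=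
      Multiset.exists_min_image_of_exists id ⟨D, hD, ha, hb, hbp⟩
    rw [removalTail, dif_pos hx]
    obtain ⟨⟨-, -, hbE, hbpE⟩, hmin⟩ := Classical.choose_spec hx
    set E := Classical.choose hx
    have hED := seg_le_iff.mp (hmin D ⟨hD, ha, hb, hbp⟩)
    by_cases hbED : segB E ≤ segB D
    · exact ⟨E, List.mem_cons_self, by omega, hbED⟩
    · obtain ⟨F, hF, hFD⟩ :=
        ih (ap := segA E) (bp := segB E) (by omega) (by omega) (by omega)
      exact ⟨F, List.mem_cons_of_mem _ hF, hFD⟩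

variable {h}

lemma removalSeq_eq_cons {Δ : Seg} (hadm : SegAdmissible Δ h) :
    ∃ D₁, removalSeq Δ h
        = D₁ :: removalTail h (segB Δ) (segB D₁ - segB Δ).toNat (segA D₁) (segB D₁) ∧
      D₁ ∈ h ∧ segA D₁ = segA Δ ∧ segB Δ ≤ segB D₁ ∧
      ∀ D ∈ h, segA D = segA Δ → segB Δ ≤ segB D → segB D₁ ≤ segB D := by
  have hx : ∃ D, (D ∈ h ∧ segA D = segA Δ ∧ segB Δ ≤ segB D) ∧
      ∀ D', (D' ∈ h ∧ segA D' = segA Δ ∧ segB Δ ≤ segB D') → segB D ≤ segB D' :=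
    Multiset.exists_min_image_of_exists segB hadm
  obtain ⟨⟨hmem, ha, hb⟩, hmin⟩ := Classical.choose_spec hx
  exact ⟨_, by rw [removalSeq, dif_pos hx], hmem, ha, hb,
    fun D hD haD hbD => hmin D ⟨hD, haD, hbD⟩⟩

variable {Δ : Seg} (hadm : SegAdmissible Δ h)
include hadm

lemma mem_removalSeq {D : Seg} (hD : D ∈ removalSeq Δ h) :
    D ∈ h ∧ segA Δ ≤ segA D ∧ segB Δ ≤ segB D := by
  obtain ⟨D₁, hL, hD₁, haD₁, hbD₁, -⟩ := removalSeq_eq_cons hadm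
  rw [hL] at hD
  rcases List.mem_cons.mp hD with rfl | hD
  · exact ⟨hD₁, haD₁.ge, hbD₁⟩
  · obtain ⟨hD, ha, hb, -⟩ := mem_removalTail h _ hD
    exact ⟨hD, by omega, hb⟩

lemma removalSeq_nested : Nested (removalSeq Δ h) := by
  obtain ⟨D₁, hL, -⟩ := removalSeq_eq_cons hadm
  rw [hL]
  refine List.Pairwise.cons (fun E hE => ?_) (removalTail_nested h _ _ _ _)
  obtain ⟨-, ha, -, hb⟩ := mem_removalTail h _ hE
  exact ⟨ha, hb⟩

lemma removalSeq_le : (removalSeq Δ h : Multiset Seg) ≤ h :=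
  (Multiset.le_iff_subset (Multiset.coe_nodup.mpr (removalSeq_nested hadm).nodup)).mpr
    fun _ hD => (mem_removalSeq hadm hD).1

lemma exists_mem_removalSeq_le {D : Seg} (hD : D ∈ h) (ha : segA Δ ≤ segA D)
    (hb : segB Δ ≤ segB D) : ∃ E ∈ removalSeq Δ h, segA E ≤ segA D ∧ segB E ≤ segB D := by
  obtain ⟨D₁, hL, -, haD₁, -, hmin⟩ := removalSeq_eq_cons hadm
  rw [hL]
  by_cases hD₁ : segA D = segA Δ ∨ segB D₁ ≤ segB D
  · refine ⟨D₁, List.mem_cons_self, by omega, ?_⟩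
    rcases hD₁ with haD | hbD
    · exact hmin D hD haD hb
    · exact hbD
  · obtain ⟨E, hE, hED⟩ := exists_mem_removalTail_le h (segB Δ) (ap := segA D₁)
        (bp := segB D₁) le_rfl hD (by omega) hb (by omega)
    exact ⟨E, List.mem_cons_of_mem _ hE, hED⟩

end RemovalSequence

section Epsilon

variable (Θ : Seg)

lemma epsilonSeg_add (s t : Multiset Seg) :
    epsilonSeg Θ (s + t) = epsilonSeg Θ s + epsilonSeg Θ t := by
  simp only [epsilonSeg, atc, Multiset.filter_add, Multiset.card_add]

lemma epsilonSeg_singleton (D : Seg) :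
    epsilonSeg Θ {D} = if segA D = segA Θ ∧ segB Θ ≤ segB D then 1 else 0 := by
  unfold epsilonSeg atc Subseg
  rw [Multiset.filter_singleton]
  by_cases hD : segA D = segA Θ
  · rw [if_pos hD, Multiset.filter_singleton]
    by_cases hb : segB Θ ≤ segB D
    · rw [if_pos ⟨hD.le, hb⟩, if_pos ⟨hD, hb⟩, Multiset.card_singleton]
    · rw [if_neg (by omega), if_neg (by omega)]
      rfl
  · rw [if_neg hD, if_neg (by omega)]
    rfl

lemma epsilonSeg_cons (D : Seg) (s : Multiset Seg) :
    epsilonSeg Θ (D ::ₘ s)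
      = (if segA D = segA Θ ∧ segB Θ ≤ segB D then 1 else 0) + epsilonSeg Θ s := by
  rw [← Multiset.singleton_add, epsilonSeg_add, epsilonSeg_singleton]

lemma epsilonSeg_mkSeg (a b : ℤ) :
    epsilonSeg Θ (mkSeg? a b) = if a = segA Θ ∧ segB Θ ≤ b then 1 else 0 := by
  have := segA_le_segB Θ
  unfold mkSeg?
  split
  · rw [epsilonSeg_singleton, segA_mk, segB_mk]
  · rw [if_neg (by omega)]
    rfl

end Epsilon

/-- The number of truncations `Δᵢᵗʳ` in `truncList b l` that contain `[c, b']` and start at `c`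
although the segment they stand in for (the next one of `l`; none for the last truncation
`[b+1, bᵣ]`) does not. -/
def crossCount (b c b' : ℤ) : List Seg → ℕ
  | [] => 0
  | [D] => if c = b + 1 ∧ b' ≤ segB D then 1 else 0
  | D :: E :: rest =>
    (if segA E = c ∧ segB E < b' ∧ b' ≤ segB D then 1 else 0) + crossCount b c b' (E :: rest)

lemma epsilonSeg_truncList (Θ : Seg) (b : ℤ) : ∀ {l : List Seg}, Nested l →
    epsilonSeg Θ (truncList b l) = epsilonSeg Θ l.tail + crossCount b (segA Θ) (segB Θ) l
  | [], _ => rfl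
  | [D], _ => by
    rw [truncList, epsilonSeg_mkSeg, crossCount]
    simp only [List.tail_cons, Multiset.coe_nil]
    split_ifs <;> first | rfl | omega
  | D :: E :: rest, hl => by
    have hDE := List.rel_of_pairwise_cons hl List.mem_cons_self
    have := segA_le_segB E
    rw [truncList, epsilonSeg_add, epsilonSeg_mkSeg, epsilonSeg_truncList Θ b hl.of_cons,
      crossCount, List.tail_cons, List.tail_cons, ← Multiset.cons_coe, epsilonSeg_cons]
    split_ifs <;> omega

lemma crossCount_eq_zero_of_forall_lt (b c b' : ℤ) : ∀ {l : List Seg},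
    (∀ E ∈ l, segB E < b') → crossCount b c b' l = 0
  | [], _ => rfl
  | [D], hl => if_neg fun h => (hl D List.mem_cons_self).not_ge h.2
  | D :: E :: rest, hl => by
    rw [crossCount, if_neg fun h => (hl D List.mem_cons_self).not_ge h.2.2,
      crossCount_eq_zero_of_forall_lt b c b' fun F hF => hl F (List.mem_cons_of_mem _ hF)]

lemma crossCount_eq_zero_of_mem (b : ℤ) {c b' : ℤ} : ∀ {l : List Seg}, Nested l →
    ∀ {E : Seg}, E ∈ l → segA E < c → segB E < b' → crossCount b c b' l = 0
  | [], _, _, hE, _, _ => absurd hE List.not_mem_nil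
  | D :: rest, hl, E, hE, ha, hb => by
    rcases List.mem_cons.mp hE with rfl | hE
    · refine crossCount_eq_zero_of_forall_lt b c b' fun F hF => ?_
      rcases List.mem_cons.mp hF with rfl | hF
      · exact hb
      · exact (List.rel_of_pairwise_cons hl hF).2.trans hb
    · obtain _ | ⟨F, rest⟩ := rest
      · exact absurd hE List.not_mem_nil
      have haF : segA F ≤ segA E := by
        rcases List.mem_cons.mp hE with rfl | hE
        · exact le_rfl
        · exact (List.rel_of_pairwise_cons hl.of_cons hE).1.le
      rw [crossCount, crossCount_eq_zero_of_mem b hl.of_cons hE ha hb, if_neg (by omega)]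

lemma exists_crossCount_pos {b a' b' : ℤ} (hb : b < b') (ha' : a' ≤ b + 1) :
    ∀ {D : Seg} {l : List Seg}, b' ≤ segB D → (∀ F ∈ l, segB F < b' → a' ≤ segA F) →
      ∃ c, a' ≤ c ∧ c ≤ b' ∧ 0 < crossCount b c b' (D :: l)
  | D, [], hD, _ => ⟨b + 1, ha', by omega, by simp [crossCount, hD]⟩
  | D, F :: l, hD, hl => by
    by_cases hF : b' ≤ segB F
    · obtain ⟨c, hc, hcb, hpos⟩ :=
        exists_crossCount_pos hb ha' hF fun G hG => hl G (List.mem_cons_of_mem _ hG)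
      exact ⟨c, hc, hcb, by rw [crossCount]; omega⟩
    · have := segA_le_segB F
      refine ⟨segA F, hl F List.mem_cons_self (by omega), by omega, ?_⟩
      rw [crossCount, if_pos ⟨rfl, by omega, hD⟩]
      omega

section Removal

variable {h : Multiset Seg} {Δ Δ' : Seg} (hadm : SegAdmissible Δ h)
include hadm

lemma epsilonSeg_segRemove {Θ : Seg} (hΘ : segA Δ < segA Θ) :
    epsilonSeg Θ ((segRemove Δ h).getD 0)
      = epsilonSeg Θ h + crossCount (segB Δ) (segA Θ) (segB Θ) (removalSeq Δ h) := by
  obtain ⟨D₁, hL, -, haD₁, -⟩ := removalSeq_eq_cons hadm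
  have hsplit : epsilonSeg Θ h
      = epsilonSeg Θ (h - removalSeq Δ h) + epsilonSeg Θ (removalSeq Δ h) := by
    rw [← epsilonSeg_add, tsub_add_cancel_of_le (removalSeq_le hadm)]
  have hhead : epsilonSeg Θ (removalSeq Δ h) = epsilonSeg Θ (removalSeq Δ h).tail := by
    rw [hL, List.tail_cons, ← Multiset.cons_coe, epsilonSeg_cons, if_neg (by omega), zero_add]
  rw [segRemove, if_pos hadm, Option.getD_some, epsilonSeg_add,
    epsilonSeg_truncList Θ _ (removalSeq_nested hadm)]
  omega

lemma etaEq_segRemove_iff (haa' : segA Δ < segA Δ') (ha'b : segA Δ' ≤ segB Δ + 1)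
    (hlt : segB Δ < segB Δ') :
    etaEq Δ' h ((segRemove Δ h).getD 0)
      ↔ ∃ E ∈ removalSeq Δ h, segA E < segA Δ' ∧ segB E < segB Δ' := by
  have hcross : etaEq Δ' h ((segRemove Δ h).getD 0) ↔ ∀ c, segA Δ' ≤ c → c ≤ segB Δ' →
      crossCount (segB Δ) c (segB Δ') (removalSeq Δ h) = 0 := by
    refine forall_congr' fun c => forall_congr' fun hc => forall_congr' fun hcb => ?_
    rw [epsilonSeg_segRemove hadm (by rw [segA_mk]; omega), segA_mk, segB_mk, left_eq_add]
  rw [hcross]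
  constructor
  · intro hzero
    by_contra! hne
    obtain ⟨D₁, hL, -, haD₁, -⟩ := removalSeq_eq_cons hadm
    rw [hL] at hzero hne
    obtain ⟨c, hc, hcb, hpos⟩ := exists_crossCount_pos hlt ha'b
      (hne D₁ List.mem_cons_self (by omega)) fun F hF hFb =>
        not_lt.mp fun haF => (hne F (List.mem_cons_of_mem _ hF) haF).not_gt hFb
    exact hpos.ne' (hzero c hc hcb)
  · rintro ⟨E, hE, haE, hbE⟩ c hc -
    exact crossCount_eq_zero_of_mem _ (removalSeq_nested hadm) hE (by omega) hbE

lemma nonOverlap_iff (haa' : segA Δ < segA Δ') (ha'b : segA Δ' ≤ segB Δ + 1) :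
    NonOverlap Δ Δ' h ↔ ∃ E ∈ removalSeq Δ h, segA E < segA Δ' ∧ segB E < segB Δ' := by
  set M := (removalSeq Δ h).filter
    fun D => decide (segA D ≤ segA Δ' - 1 ∧ segA Δ' - 1 ≤ segB D)
  have hmemM {E : Seg} : E ∈ M ↔ E ∈ removalSeq Δ h ∧ segA E < segA Δ' := by
    simp only [M, List.mem_filter, decide_eq_true_eq]
    constructor
    · rintro ⟨hE, haE, -⟩
      exact ⟨hE, by omega⟩
    · rintro ⟨hE, haE⟩
      have := (mem_removalSeq hadm hE).2.2
      exact ⟨hE, by omega, by omega⟩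
  obtain ⟨D₁, hL, -, haD₁, -⟩ := removalSeq_eq_cons hadm
  have hM : M ≠ [] := List.ne_nil_of_mem (hmemM.2 ⟨hL ▸ List.mem_cons_self, by omega⟩)
  have hbar : shortestCont Δ h (segA Δ' - 1) = M.getLast hM := by
    rw [shortestCont, List.getLast?_eq_some_getLast hM]
    rfl
  have hMb : M.Pairwise fun D E => segB E ≤ segB D :=
    ((removalSeq_nested hadm).sublist List.filter_sublist).imp fun hDE => hDE.2.le
  have hlast (E : Seg) (hE : E ∈ M) : segB (M.getLast hM) ≤ segB E :=
    hMb.rel_getLast_of_rel_getLast_getLast hE le_rfl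
  obtain ⟨hlastL, hlasta⟩ := hmemM.1 (List.getLast_mem hM)
  rw [NonOverlap, hbar, Subseg]
  constructor
  · intro hno
    exact ⟨_, hlastL, hlasta, not_le.mp fun hb => hno ⟨by omega, hb⟩⟩
  · rintro ⟨E, hE, haE, hbE⟩ ⟨-, hb⟩
    have := hlast E (hmemM.2 ⟨hE, haE⟩)
    omega

lemma intermediateSeg_iff :
    IntermediateSeg Δ Δ' h ↔ ∃ E ∈ removalSeq Δ h, segA E < segA Δ' ∧ segB E < segB Δ' := by
  constructor
  · rintro ⟨D, hD, ha, ha', hb, hb'⟩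
    obtain ⟨E, hE, haE, hbE⟩ := exists_mem_removalSeq_le hadm hD ha hb
    exact ⟨E, hE, by omega, by omega⟩
  · rintro ⟨E, hE, ha', hb'⟩
    obtain ⟨hEh, ha, hb⟩ := mem_removalSeq hadm hE
    exact ⟨E, hEh, ha, ha', hb, hb'⟩

end Removal

/-- equivalence of the non-overlapping property, the
`η`-invariant condition, and the intermediate segment property. -/
theorem statement16 (h : Multiset Seg) (Δ Δ' : Seg)
    (hadm : SegAdmissible Δ h) (hlink : Linked Δ Δ') (hlt : segB Δ < segB Δ') :
    (NonOverlap Δ Δ' h ↔ etaEq Δ' h ((segRemove Δ h).getD 0)) ∧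
    (NonOverlap Δ Δ' h ↔ IntermediateSeg Δ Δ' h) := by
  have haa' : segA Δ < segA Δ' := not_le.mp fun hle => hlink.2.2.1 ⟨hle, hlt.le⟩
  rw [nonOverlap_iff hadm haa' hlink.2.1, etaEq_segRemove_iff hadm haa' hlink.2.1 hlt,
    intermediateSeg_iff hadm]
  exact ⟨Iff.rfl, Iff.rfl⟩
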